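/- arXiv:1409.1991 — 2 statements merged into one kernel-verified Lean document; each statement's English description precedes it below -/
import Mathlib

section
/- Let $I \subseteq \mathbb{R}$ be an open interval and $f : I \to (0,\infty)$ a smooth function with $(\log f)''(t) \le 0$ for all $t \in I$. Let $u : \mathbb{R}^2 \to \mathbb{R}$ be any smooth doubly periodic function with $u(\mathbb{R}^2) \subseteq I$ and $|Du| < f(u)$ everywhere. Then there exists a point $p \in \mathbb{R}^2$ such that $H(u)(p)^2 \ge \dfrac{f'(u(p))^2}{f(u(p))^2}$. -/
noncomputable section

/-- The Euclidean plane. -/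
abbrev E2 : Type := EuclideanSpace ℝ (Fin 2)

/-- Euclidean divergence of a vector field on the plane: the trace of its derivative. -/
def divergence (V : E2 → E2) (p : E2) : ℝ :=
  LinearMap.trace ℝ E2 (fderiv ℝ V p).toLinearMap

/-- The mean curvature operator `H(u)` of the spacelike graph of `u` in the GRW spacetime
`I ×_f ℝ²`:
`H(u) = - div (Du / (2 f(u) √(f(u)² - |Du|²))) - (f'(u) / (2 √(f(u)² - |Du|²))) (2 + |Du|²/f(u)²)`. -/
def Hmean (f : ℝ → ℝ) (u : E2 → ℝ) (p : E2) : ℝ :=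
  - divergence
      (fun q => (2 * f (u q) * Real.sqrt ((f (u q)) ^ 2 - ‖gradient u q‖ ^ 2))⁻¹ • gradient u q) p
  - deriv f (u p) / (2 * Real.sqrt ((f (u p)) ^ 2 - ‖gradient u p‖ ^ 2)) *
      (2 + ‖gradient u p‖ ^ 2 / (f (u p)) ^ 2)

/-- A function on the plane is doubly periodic if it is invariant under translation by
every vector of `ℤ²`. -/
def DoublyPeriodic (u : E2 → ℝ) : Prop :=
  ∀ p : E2, ∀ k : Fin 2 → ℤ,
    u (p + (WithLp.equiv 2 (Fin 2 → ℝ)).symm (fun i => (k i : ℝ))) = u p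

end

/- ### Auxiliary lemmas -/

open Filter Topology

/-- Second derivative test (necessary condition) at a local max. -/
lemma sdt {φ : ℝ → ℝ} (hφ : ContDiff ℝ (⊤ : ℕ∞) φ) (hmax : IsLocalMax φ 0) :
    deriv (deriv φ) 0 ≤ 0 := by
  by_contra h
  push_neg at h
  have hφ' : ContDiff ℝ ((⊤:ℕ∞):WithTop ℕ∞) φ := hφ.of_le (by simp)
  set ψ := deriv φ with hψ
  have hψ0 : ψ 0 = 0 := hmax.deriv_eq_zero
  have hψd : Differentiable ℝ ψ :=
    (contDiff_infty_iff_deriv.mp hφ').2.differentiable (by simp)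
  have hd : HasDerivAt ψ (deriv ψ 0) 0 := (hψd 0).hasDerivAt
  have hslope : Tendsto (slope ψ 0) (𝓝[≠] 0) (𝓝 (deriv ψ 0)) :=
    hasDerivAt_iff_tendsto_slope.mp hd
  have hev : ∀ᶠ t in 𝓝[≠] (0:ℝ), 0 < slope ψ 0 t :=
    hslope (Ioi_mem_nhds h)
  rw [eventually_nhdsWithin_iff, Metric.eventually_nhds_iff] at hev
  obtain ⟨δ, hδ, hδ'⟩ := hev
  -- ψ positive on (0, δ)
  have hpos : ∀ t ∈ Set.Ioo (0:ℝ) δ, 0 < ψ t := by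
    intro t ht
    have h1 : 0 < slope ψ 0 t := by
      apply hδ' (by simpa [abs_of_pos ht.1] using ht.2) (ne_of_gt ht.1)
    have : slope ψ 0 t = ψ t / t := by simp [slope, hψ0]; ring
    rw [this] at h1
    have := mul_pos h1 ht.1
    rwa [div_mul_cancel₀ _ (ne_of_gt ht.1)] at this
  have hmono : StrictMonoOn φ (Set.Icc 0 δ) := by
    apply strictMonoOn_of_deriv_pos (convex_Icc 0 δ)
      (hφ'.continuous.continuousOn)
    intro t ht
    rw [interior_Icc] at ht
    exact hpos t ht
  obtain ⟨ε, hε, hε'⟩ := Metric.eventually_nhds_iff.mp hmax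
  set t := min δ ε / 2 with htdef
  have ht0 : 0 < t := by positivity
  have htδ : t < δ := by
    have : min δ ε ≤ δ := min_le_left _ _
    simp only [htdef]; linarith
  have htε : |t - 0| < ε := by
    have : min δ ε ≤ ε := min_le_right _ _
    rw [sub_zero, abs_of_pos ht0]; simp only [htdef]; linarith
  have h1 : φ 0 < φ t := hmono ⟨le_refl 0, by linarith⟩ ⟨le_of_lt ht0, le_of_lt htδ⟩ ht0
  have h2 : φ t ≤ φ 0 := hε' htε
  linarith

lemma grad_contDiff {u : E2 → ℝ} (hu : ContDiff ℝ (⊤ : ℕ∞) u) :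
    ContDiff ℝ ((⊤:ℕ∞):WithTop ℕ∞) (gradient u) := by
  have h1 : ContDiff ℝ ((⊤:ℕ∞):WithTop ℕ∞) (fderiv ℝ u) :=
    (hu.of_le (by simp)).fderiv_right (le_refl _)
  have h2 := ((InnerProductSpace.toDual ℝ E2).symm.toContinuousLinearEquiv
      : StrongDual ℝ E2 ≃L[ℝ] E2).toContinuousLinearMap.contDiff.comp h1
  exact h2

lemma fderiv_eq_inner_grad {u : E2 → ℝ} (q : E2) (v : E2) :
    fderiv ℝ u q v = inner ℝ (gradient u q) v := by
  rw [gradient]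
  exact (InnerProductSpace.toDual_symm_apply).symm

lemma fderiv_apply_single {u : E2 → ℝ} (q : E2) (i : Fin 2) :
    fderiv ℝ u q (EuclideanSpace.single i 1) = gradient u q i := by
  rw [fderiv_eq_inner_grad, EuclideanSpace.inner_single_right]
  simp [EuclideanSpace.inner_single_right]

lemma diag_nonpos {u : E2 → ℝ} (hu : ContDiff ℝ (⊤ : ℕ∞) u) {p : E2}
    (hmax : IsLocalMax u p) (i : Fin 2) :
    fderiv ℝ (gradient u) p (EuclideanSpace.single i 1) i ≤ 0 := by
  set e : E2 := EuclideanSpace.single i 1 with he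
  set L : ℝ → E2 := fun t => p + t • e with hL
  have hLc : ContDiff ℝ (⊤ : ℕ∞) L := by
    apply ContDiff.add contDiff_const
    exact (contDiff_id).smul contDiff_const
  have hL0 : L 0 = p := by simp [hL]
  have hLd : ∀ t, HasDerivAt L e t := by
    intro t
    simpa [hL] using ((hasDerivAt_id t).smul_const e).const_add p
  set φ : ℝ → ℝ := fun t => u (L t) with hφdef
  have hφ : ContDiff ℝ (⊤ : ℕ∞) φ := hu.comp hLc
  have hφmax : IsLocalMax φ 0 := by
    have : Filter.Tendsto L (nhds 0) (nhds p) := by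
      rw [← hL0]; exact hLc.continuous.continuousAt
    exact IsMaxFilter.comp_tendsto (by rw [hL0]; exact hmax) this
  have hud : Differentiable ℝ u := hu.differentiable (by simp)
  have hgd : Differentiable ℝ (gradient u) :=
    (grad_contDiff hu).differentiable (by simp)
  have hderiv : deriv φ = fun t => gradient u (L t) i := by
    funext t
    have h1 : HasDerivAt φ (fderiv ℝ u (L t) e) t :=
      (hud (L t)).hasFDerivAt.comp_hasDerivAt t (hLd t)
    rw [h1.deriv, fderiv_apply_single]
  have hderiv2 : deriv (deriv φ) 0 = fderiv ℝ (gradient u) p e i := by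
    rw [hderiv]
    have h1 : HasDerivAt (fun t => gradient u (L t)) (fderiv ℝ (gradient u) p e) 0 := by
      have h0 : HasFDerivAt (gradient u) (fderiv ℝ (gradient u) p) (L 0) := by
        rw [hL0]; exact (hgd p).hasFDerivAt
      exact h0.comp_hasDerivAt 0 (hLd 0)
    have h2 : HasDerivAt (fun t => gradient u (L t) i)
        ((fderiv ℝ (gradient u) p e) i) 0 :=
      ((EuclideanSpace.proj i : E2 →L[ℝ] ℝ).hasFDerivAt.comp_hasDerivAt 0 h1)
    exact h2.deriv
  rw [← hderiv2]
  exact sdt hφ hφmax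

lemma diag_nonneg {u : E2 → ℝ} (hu : ContDiff ℝ (⊤ : ℕ∞) u) {p : E2}
    (hmin : IsLocalMin u p) (i : Fin 2) :
    0 ≤ fderiv ℝ (gradient u) p (EuclideanSpace.single i 1) i := by
  have h := diag_nonpos (hu.neg) (hmin.neg) i
  have hgneg : (gradient (fun q => -u q)) = fun q => -gradient u q := by
    funext q
    rw [gradient, gradient, fderiv_fun_neg]
    simp
  rw [hgneg, fderiv_fun_neg] at h
  simp at h
  linarith

lemma trace_eq_sum_diag (A : E2 →L[ℝ] E2) :
    LinearMap.trace ℝ E2 A.toLinearMap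
      = ∑ i : Fin 2, A (EuclideanSpace.single i 1) i := by
  rw [LinearMap.trace_eq_matrix_trace ℝ (PiLp.basisFun 2 ℝ (Fin 2)) A.toLinearMap]
  rw [Matrix.trace]
  apply Finset.sum_congr rfl
  intro i _
  rw [Matrix.diag_apply, LinearMap.toMatrix_apply]
  simp [PiLp.basisFun_apply, PiLp.basisFun_repr]

lemma divergence_smul_eq {g : E2 → ℝ} {w : E2 → E2} {p : E2}
    (hg : DifferentiableAt ℝ g p) (hw : DifferentiableAt ℝ w p) (hwp : w p = 0) :
    divergence (fun q => g q • w q) p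
      = g p * ∑ i : Fin 2, fderiv ℝ w p (EuclideanSpace.single i 1) i := by
  rw [divergence, fderiv_fun_smul hg hw, hwp]
  simp only [ContinuousLinearMap.smulRight_apply]
  rw [trace_eq_sum_diag]
  simp [Finset.mul_sum]
  ring

lemma exists_global_max {u : E2 → ℝ} (hc : Continuous u) (hper : DoublyPeriodic u) :
    ∃ p : E2, ∀ q : E2, u q ≤ u p := by
  set K : Set E2 := (WithLp.equiv 2 (Fin 2 → ℝ)).symm '' (Set.Icc 0 1) with hK
  have hKc : IsCompact K := by
    apply IsCompact.image isCompact_Icc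
    exact PiLp.continuous_toLp ..
  have hKne : K.Nonempty := ⟨_, ⟨0, by simp, rfl⟩⟩
  obtain ⟨p, hpK, hp⟩ := hKc.exists_isMaxOn hKne hc.continuousOn
  refine ⟨p, fun q => ?_⟩
  set k : Fin 2 → ℤ := fun i => -⌊q i⌋ with hk
  have hmem : q + (WithLp.equiv 2 (Fin 2 → ℝ)).symm (fun i => (k i : ℝ)) ∈ K := by
    refine ⟨fun i => q i - ⌊q i⌋, ⟨?_, ?_⟩, ?_⟩
    · intro i
      simpa using Int.fract_nonneg (q i)
    · intro i
      simp only [Pi.one_apply]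
      have := Int.fract_lt_one (q i)
      simp only [Int.fract] at this
      linarith
    · apply (WithLp.equiv 2 (Fin 2 → ℝ)).injective
      funext i
      simp only [WithLp.equiv_apply, WithLp.ofLp_add, WithLp.equiv_symm_apply, WithLp.ofLp_toLp]
      simp [hk]
      rfl
  calc u q = u (q + (WithLp.equiv 2 (Fin 2 → ℝ)).symm (fun i => (k i : ℝ))) :=
        (hper q k).symm
    _ ≤ u p := hp hmem

lemma logderiv_antitone {I : Set ℝ} (hI : IsOpen I) (hIc : I.OrdConnected)
    {f : ℝ → ℝ} (hf : ContDiffOn ℝ (⊤ : ℕ∞) f I) (hfpos : ∀ t ∈ I, 0 < f t)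
    (hlog : ∀ t ∈ I, deriv (deriv (fun s => Real.log (f s))) t ≤ 0) :
    AntitoneOn (fun t => deriv f t / f t) I := by
  have hconv : Convex ℝ I := hIc.convex
  have hfd : ∀ t ∈ I, DifferentiableAt ℝ f t := fun t ht =>
    (hf.contDiffAt (hI.mem_nhds ht)).differentiableAt (by simp)
  set g : ℝ → ℝ := deriv (fun s => Real.log (f s)) with hg
  have hlf : ContDiffOn ℝ ((⊤:ℕ∞):WithTop ℕ∞) (fun s => Real.log (f s)) I := by
    apply ContDiffOn.comp (Real.contDiffOn_log) (hf.of_le (by simp))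
    intro t ht
    exact ne_of_gt (hfpos t ht)
  have hgI : ∀ t ∈ I, g t = deriv f t / f t := by
    intro t ht
    have h1 : HasDerivAt (fun s => Real.log (f s)) ((f t)⁻¹ * deriv f t) t :=
      (Real.hasDerivAt_log (ne_of_gt (hfpos t ht))).comp t (hfd t ht).hasDerivAt
    rw [hg, h1.deriv]; ring
  have hgc : ContinuousOn g I := by
    have := hlf.continuousOn_deriv_of_isOpen hI (by exact_mod_cast le_top)
    exact this
  have hgd : DifferentiableOn ℝ g (interior I) := by
    rw [hI.interior_eq]
    intro t ht
    have h2 : ContDiffOn ℝ ((⊤:ℕ∞):WithTop ℕ∞) g I :=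
      hlf.deriv_of_isOpen hI (by exact_mod_cast le_top)
    exact ((h2.contDiffAt (hI.mem_nhds ht)).differentiableAt
      (by simp)).differentiableWithinAt
  have hanti : AntitoneOn g I := by
    apply antitoneOn_of_deriv_nonpos hconv hgc hgd
    intro t ht
    rw [hI.interior_eq] at ht
    exact hlog t ht
  intro a ha b hb hab
  simp only
  rw [← hgI a ha, ← hgI b hb]
  exact hanti ha hb hab

/-- Evaluation of `Hmean` at a critical point of `u`. -/
lemma Hmean_crit {f : ℝ → ℝ} {u : E2 → ℝ} (hu : ContDiff ℝ (⊤ : ℕ∞) u) {p : E2}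
    (hfd : DifferentiableAt ℝ f (u p)) (hF : 0 < f (u p))
    (hlt : ‖gradient u p‖ < f (u p)) (h0 : gradient u p = 0) :
    Hmean f u p = -((2 * f (u p) * f (u p))⁻¹ *
        ∑ i : Fin 2, fderiv ℝ (gradient u) p (EuclideanSpace.single i 1) i)
      - deriv f (u p) / f (u p) := by
  have hud : Differentiable ℝ u := hu.differentiable (by simp)
  have hgc := grad_contDiff hu
  have hgd : Differentiable ℝ (gradient u) := hgc.differentiable (by simp)
  have hFne : f (u p) ≠ 0 := ne_of_gt hF
  have hpos : 0 < (f (u p)) ^ 2 - ‖gradient u p‖ ^ 2 := by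
    have h1 : ‖gradient u p‖ ^ 2 < (f (u p)) ^ 2 :=
      pow_lt_pow_left₀ hlt (norm_nonneg _) (by norm_num)
    linarith
  have hs : Real.sqrt ((f (u p)) ^ 2 - ‖gradient u p‖ ^ 2) = f (u p) := by
    rw [h0]
    simp [Real.sqrt_sq hF.le]
  have h1 : DifferentiableAt ℝ (fun q => f (u q)) p := hfd.comp p (hud p)
  have h2 : DifferentiableAt ℝ (fun q => ‖gradient u q‖ ^ 2) p := by
    have := ((hgc.contDiffAt (x := p)).norm_sq (𝕜 := ℝ))
    exact this.differentiableAt (by simp)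
  have harg : DifferentiableAt ℝ (fun q => (f (u q)) ^ 2 - ‖gradient u q‖ ^ 2) p :=
    (h1.pow 2).sub h2
  have h3 : DifferentiableAt ℝ
      (fun q => Real.sqrt ((f (u q)) ^ 2 - ‖gradient u q‖ ^ 2)) p :=
    harg.sqrt (ne_of_gt hpos)
  have hden : DifferentiableAt ℝ
      (fun q => 2 * f (u q) * Real.sqrt ((f (u q)) ^ 2 - ‖gradient u q‖ ^ 2)) p :=
    ((differentiableAt_const 2).mul h1).mul h3
  have hdenne : 2 * f (u p) * Real.sqrt ((f (u p)) ^ 2 - ‖gradient u p‖ ^ 2) ≠ 0 := by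
    rw [hs]; positivity
  have hg : DifferentiableAt ℝ
      (fun q => (2 * f (u q) * Real.sqrt ((f (u q)) ^ 2 - ‖gradient u q‖ ^ 2))⁻¹) p :=
    hden.inv hdenne
  rw [Hmean, divergence_smul_eq hg (hgd p) h0, hs, h0]
  simp only [norm_zero]
  have : deriv f (u p) / (2 * f (u p)) * (2 + 0 ^ 2 / (f (u p)) ^ 2)
      = deriv f (u p) / f (u p) := by
    field_simp
    ring
  rw [this]

/-- Remark 3.8 on the flat torus: if `(log f)'' ≤ 0` on `I`, any smooth
doubly periodic `u` with `|Du| < f(u)` has some point `p` where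
`H(u)(p)² ≥ f'(u(p))²/f(u(p))²`. -/
theorem stmt8 (I : Set ℝ) (hI : IsOpen I) (hIc : I.OrdConnected)
    (f : ℝ → ℝ) (hf : ContDiffOn ℝ (⊤ : ℕ∞) f I) (hfpos : ∀ t ∈ I, 0 < f t)
    (hlog : ∀ t ∈ I, deriv (deriv (fun s => Real.log (f s))) t ≤ 0)
    (u : E2 → ℝ) (hu : ContDiff ℝ (⊤ : ℕ∞) u) (hrange : ∀ p, u p ∈ I)
    (hper : DoublyPeriodic u)
    (hgrad : ∀ p, ‖gradient u p‖ < f (u p)) :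
    ∃ p : E2, (deriv f (u p)) ^ 2 / (f (u p)) ^ 2 ≤ (Hmean f u p) ^ 2 := by
  have hfd : ∀ p : E2, DifferentiableAt ℝ f (u p) := fun p =>
    (hf.contDiffAt (hI.mem_nhds (hrange p))).differentiableAt (by simp)
  -- maximum point
  obtain ⟨pM, hpM⟩ := exists_global_max hu.continuous hper
  -- minimum point (max of -u)
  have hperneg : DoublyPeriodic (fun q => -u q) := fun p k => by exact congrArg (fun x => -x) (hper p k)
  obtain ⟨pm, hpm'⟩ := exists_global_max hu.continuous.neg hperneg
  have hpm : ∀ q : E2, u pm ≤ u q := fun q => by have := hpm' q; simpa using this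
  have hmaxM : IsLocalMax u pM := Filter.Eventually.of_forall hpM
  have hminm : IsLocalMin u pm := Filter.Eventually.of_forall hpm
  have hgM : gradient u pM = 0 := by
    rw [gradient, hmaxM.fderiv_eq_zero]; simp
  have hgm : gradient u pm = 0 := by
    rw [gradient, hminm.fderiv_eq_zero]; simp
  have hanti := logderiv_antitone hI hIc hf hfpos hlog
  set cM : ℝ := deriv f (u pM) / f (u pM) with hcM
  set cm : ℝ := deriv f (u pm) / f (u pm) with hcm
  have hccomp : cM ≤ cm := hanti (hrange pm) (hrange pM) (hpm pM)
  by_cases hc : cM ≤ 0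
  · -- use the maximum point
    refine ⟨pM, ?_⟩
    have hT : (∑ i : Fin 2, fderiv ℝ (gradient u) pM (EuclideanSpace.single i 1) i) ≤ 0 :=
      Finset.sum_nonpos fun i _ => diag_nonpos hu hmaxM i
    have hEv := Hmean_crit hu (hfd pM) (hfpos _ (hrange pM)) (hgrad pM) hgM
    set T := ∑ i : Fin 2, fderiv ℝ (gradient u) pM (EuclideanSpace.single i 1) i
    set G : ℝ := (2 * f (u pM) * f (u pM))⁻¹ with hG
    have hGpos : 0 < G := by
      rw [hG]
      have := hfpos _ (hrange pM)
      positivity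
    have hrw : (deriv f (u pM)) ^ 2 / (f (u pM)) ^ 2 = cM ^ 2 := by
      rw [hcM, div_pow]
    rw [hrw, hEv]
    have ha : G * T ≤ 0 := mul_nonpos_of_nonneg_of_nonpos hGpos.le hT
    nlinarith [mul_nonneg (neg_nonneg.mpr ha) (by linarith : (0:ℝ) ≤ -(G*T) - 2*cM)]
  · -- use the minimum point
    push_neg at hc
    have hcmpos : 0 ≤ cm := le_trans hc.le hccomp
    refine ⟨pm, ?_⟩
    have hT : 0 ≤ (∑ i : Fin 2, fderiv ℝ (gradient u) pm (EuclideanSpace.single i 1) i) :=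
      Finset.sum_nonneg fun i _ => diag_nonneg hu hminm i
    have hEv := Hmean_crit hu (hfd pm) (hfpos _ (hrange pm)) (hgrad pm) hgm
    set T := ∑ i : Fin 2, fderiv ℝ (gradient u) pm (EuclideanSpace.single i 1) i
    set G : ℝ := (2 * f (u pm) * f (u pm))⁻¹ with hG
    have hGpos : 0 < G := by
      rw [hG]
      have := hfpos _ (hrange pm)
      positivity
    have hrw : (deriv f (u pm)) ^ 2 / (f (u pm)) ^ 2 = cm ^ 2 := by
      rw [hcm, div_pow]
    rw [hrw, hEv]
    have ha : 0 ≤ G * T := mul_nonneg hGpos.le hT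
    nlinarith [mul_nonneg ha (by linarith : (0:ℝ) ≤ G*T + 2*cm)]
end

section
/- Let $I \subseteq \mathbb{R}$ be an open interval and $f : I \to (0,\infty)$ a smooth function with $(\log f)''(t) \le 0$ for all $t \in I$. Let $u : \mathbb{R}^2 \to \mathbb{R}$ be a smooth doubly periodic function with $u(\mathbb{R}^2) \subseteq I$ and $|Du| < f(u)$ everywhere. If for all points $p, q \in \mathbb{R}^2$ one has $H(u)(p)^2 \le \dfrac{f'(u(q))^2}{f(u(q))^2}$, then $u$ is constant. -/
noncomputable section StmtAux

lemma trace_eq_sum (A : E2 →L[ℝ] E2) :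
    LinearMap.trace ℝ E2 A.toLinearMap
      = ∑ i : Fin 2, A ((EuclideanSpace.basisFun (Fin 2) ℝ) i) i := by
  rw [LinearMap.trace_eq_matrix_trace ℝ (EuclideanSpace.basisFun (Fin 2) ℝ).toBasis]
  rw [Matrix.trace]
  congr 1
  ext i
  rw [Matrix.diag_apply, LinearMap.toMatrix_apply]
  simp [EuclideanSpace.basisFun_repr]

lemma trace_smulRight (ℓ : E2 →L[ℝ] ℝ) (v : E2) :
    LinearMap.trace ℝ E2 (ℓ.smulRight v).toLinearMap = ℓ v := by
  rw [trace_eq_sum]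
  have hv : v = ∑ i : Fin 2, v i • (EuclideanSpace.basisFun (Fin 2) ℝ) i := by
    have := (EuclideanSpace.basisFun (Fin 2) ℝ).sum_repr v
    simpa [EuclideanSpace.basisFun_repr, Fin.sum_univ_two] using this.symm
  conv_rhs => rw [hv]
  rw [map_sum]
  simp only [ContinuousLinearMap.smulRight_apply, PiLp.smul_apply, smul_eq_mul, map_smul]
  exact Finset.sum_congr rfl fun i _ => mul_comm _ _

lemma divergence_smul (c : E2 → ℝ) (V : E2 → E2) (p : E2)
    (hc : DifferentiableAt ℝ c p) (hV : DifferentiableAt ℝ V p) :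
    divergence (fun q => c q • V q) p = c p * divergence V p + fderiv ℝ c p (V p) := by
  unfold divergence
  rw [fderiv_fun_smul hc hV]
  have : ((c p • fderiv ℝ V p + (fderiv ℝ c p).smulRight (V p)).toLinearMap)
      = c p • (fderiv ℝ V p).toLinearMap + ((fderiv ℝ c p).smulRight (V p)).toLinearMap := by
    rfl
  rw [this, map_add, map_smul, trace_smulRight]
  simp [smul_eq_mul]


lemma fderiv_eq_inner_gradient (u : E2 → ℝ) (p : E2) (v : E2) :
    fderiv ℝ u p v = inner ℝ (gradient u p) v := by
  rw [gradient]
  exact (InnerProductSpace.toDual_symm_apply).symm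

lemma contDiff_gradient (u : E2 → ℝ) (hu : ContDiff ℝ ((⊤:ℕ∞)) u) :
    ContDiff ℝ ((⊤:ℕ∞)) (fun p => gradient u p) := by
  have h1 : ContDiff ℝ ((⊤:ℕ∞)) (fderiv ℝ u) := hu.fderiv_right (by simp)
  have h2 := ((InnerProductSpace.toDual ℝ E2).symm.toContinuousLinearEquiv
      : StrongDual ℝ E2 ≃L[ℝ] E2).toContinuousLinearMap.contDiff (n := ((⊤:ℕ∞)))
  exact h2.comp h1

-- gradient periodicity: if u ∘ (· + κ) = u then gradient u (p + κ) = gradient u p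
lemma gradient_periodic (u : E2 → ℝ) (hu : Differentiable ℝ u) (κ : E2)
    (h : ∀ q, u (q + κ) = u q) (p : E2) : gradient u (p + κ) = gradient u p := by
  have hfd : fderiv ℝ u (p + κ) = fderiv ℝ u p := by
    have h1 : HasFDerivAt (fun q : E2 => u (q + κ))
        ((fderiv ℝ u (p + κ)).comp (ContinuousLinearMap.id ℝ E2)) p := by
      exact (hu (p + κ)).hasFDerivAt.comp p ((hasFDerivAt_id p).add_const κ)
    have h2 : HasFDerivAt u ((fderiv ℝ u (p + κ)).comp (ContinuousLinearMap.id ℝ E2)) p := by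
      have : (fun q : E2 => u (q + κ)) = u := funext h
      rwa [this] at h1
    rw [h2.fderiv, ContinuousLinearMap.comp_id]
  rw [gradient, gradient, hfd]


def σc : (ℝ × ℝ) ≃L[ℝ] E2 :=
  ((ContinuousLinearEquiv.finTwoArrow ℝ ℝ).symm).trans (EuclideanSpace.equiv (Fin 2) ℝ).symm

lemma σc_e0 : σc (1, 0) = (EuclideanSpace.basisFun (Fin 2) ℝ) 0 := by
  ext j
  rw [EuclideanSpace.basisFun_apply, EuclideanSpace.single_apply]
  fin_cases j
  · show (1:ℝ) = _; norm_num
  · show (0:ℝ) = _; norm_num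

lemma σc_e1 : σc (0, 1) = (EuclideanSpace.basisFun (Fin 2) ℝ) 1 := by
  ext j
  rw [EuclideanSpace.basisFun_apply, EuclideanSpace.single_apply]
  fin_cases j
  · show (0:ℝ) = _; norm_num
  · show (1:ℝ) = _; norm_num

lemma σc_shift1 (x y : ℝ) : σc (x + 1, y) = σc (x, y) +
    (WithLp.equiv 2 (Fin 2 → ℝ)).symm (fun i => (((![1,0] : Fin 2 → ℤ) i : ℝ))) := by
  ext j; fin_cases j
  · show x + 1 = x + _; norm_num
  · show y = y + _; norm_num

lemma σc_shift2 (x y : ℝ) : σc (x, y + 1) = σc (x, y) +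
    (WithLp.equiv 2 (Fin 2 → ℝ)).symm (fun i => (((![0,1] : Fin 2 → ℤ) i : ℝ))) := by
  ext j; fin_cases j
  · show x = x + _; norm_num
  · show y + 1 = y + _; norm_num

open MeasureTheory in
lemma periodic_divergence_eq_zero (W : E2 → E2) (hW : ContDiff ℝ ((⊤:ℕ∞)) W)
    (hWper : ∀ p : E2, ∀ k : Fin 2 → ℤ,
      W (p + (WithLp.equiv 2 (Fin 2 → ℝ)).symm (fun i => (k i : ℝ))) = W p)
    (hnn : ∀ p, 0 ≤ divergence W p) (p0 : E2) : divergence W p0 = 0 := by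
  by_contra hne
  have hpos : 0 < divergence W p0 := (hnn p0).lt_of_ne (Ne.symm hne)
  set z0 : ℝ × ℝ := σc.symm p0 with hz0
  set a : ℝ × ℝ := (z0.1 - 2⁻¹, z0.2 - 2⁻¹) with ha
  set b : ℝ × ℝ := (z0.1 + 2⁻¹, z0.2 + 2⁻¹) with hb
  have hle : a ≤ b := ⟨by simp only [ha, hb]; norm_num; linarith, by simp only [ha, hb]; norm_num; linarith⟩
  -- coordinate components of W
  set Fc : ℝ × ℝ → ℝ := fun z => (σc.symm (W (σc z))).1 with hFc
  set Gc : ℝ × ℝ → ℝ := fun z => (σc.symm (W (σc z))).2 with hGc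
  set B : (ℝ × ℝ) → (ℝ × ℝ) →L[ℝ] (ℝ × ℝ) := fun z =>
    ((σc.symm : E2 →L[ℝ] ℝ × ℝ).comp (fderiv ℝ W (σc z))).comp (σc : (ℝ × ℝ) →L[ℝ] E2) with hB
  set f' : (ℝ × ℝ) → (ℝ × ℝ) →L[ℝ] ℝ := fun z => (ContinuousLinearMap.fst ℝ ℝ ℝ).comp (B z)
  set g' : (ℝ × ℝ) → (ℝ × ℝ) →L[ℝ] ℝ := fun z => (ContinuousLinearMap.snd ℝ ℝ ℝ).comp (B z)
  have hWd : Differentiable ℝ W := hW.differentiable (by simp)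
  have hBz : ∀ z, HasFDerivAt (fun w => σc.symm (W (σc w))) (B z) z := by
    intro z
    have h1 : HasFDerivAt (fun w => W (σc w))
        ((fderiv ℝ W (σc z)).comp (σc : (ℝ × ℝ) →L[ℝ] E2)) z :=
      (hWd (σc z)).hasFDerivAt.comp z (σc.hasFDerivAt)
    exact (σc.symm.hasFDerivAt.comp z h1).congr_fderiv (by rw [hB]; rfl)
  have Hdf : ∀ z, HasFDerivAt Fc (f' z) z := fun z => (hBz z).fst
  have Hdg : ∀ z, HasFDerivAt Gc (g' z) z := fun z => (hBz z).snd
  -- divergence in coordinates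
  have hdiv : ∀ z : ℝ × ℝ, f' z (1, 0) + g' z (0, 1) = divergence W (σc z) := by
    intro z
    have h0 : f' z (1, 0) = (fderiv ℝ W (σc z)) ((EuclideanSpace.basisFun (Fin 2) ℝ) 0) 0 := by
      show (σc.symm ((fderiv ℝ W (σc z)) (σc (1, 0)))).1 = _
      rw [σc_e0]; rfl
    have h1 : g' z (0, 1) = (fderiv ℝ W (σc z)) ((EuclideanSpace.basisFun (Fin 2) ℝ) 1) 1 := by
      show (σc.symm ((fderiv ℝ W (σc z)) (σc (0, 1)))).2 = _
      rw [σc_e1]; rfl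
    rw [h0, h1, divergence, trace_eq_sum, Fin.sum_univ_two]
  -- continuity of the divergence integrand
  have hfC : Continuous (fderiv ℝ W) := (hW.fderiv_right (m := (⊤:ℕ∞)) (by simp)).continuous
  have hDc : Continuous (fun z => f' z (1, 0) + g' z (0, 1)) := by
    have c1 : Continuous fun z => (fderiv ℝ W (σc z)) (σc (1, 0)) :=
      (hfC.comp σc.continuous).clm_apply continuous_const
    have c2 : Continuous fun z => (fderiv ℝ W (σc z)) (σc (0, 1)) :=
      (hfC.comp σc.continuous).clm_apply continuous_const
    have c1' : Continuous (fun z => f' z (1, 0)) :=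
      continuous_fst.comp (σc.symm.continuous.comp c1)
    have c2' : Continuous (fun z => g' z (0, 1)) :=
      continuous_snd.comp (σc.symm.continuous.comp c2)
    exact c1'.add c2'
  -- periodicity of the components
  have hb1 : b.1 = a.1 + 1 := by simp only [ha, hb]; norm_num; ring
  have hb2 : b.2 = a.2 + 1 := by simp only [ha, hb]; norm_num; ring
  have hGper : ∀ x, Gc (x, b.2) = Gc (x, a.2) := by
    intro x
    have : W (σc (x, b.2)) = W (σc (x, a.2)) := by
      rw [hb2, σc_shift2]; exact hWper _ _
    simp only [hGc, this]
  have hFper : ∀ y, Fc (b.1, y) = Fc (a.1, y) := by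
    intro y
    have : W (σc (b.1, y)) = W (σc (a.1, y)) := by
      rw [hb1, σc_shift1]; exact hWper _ _
    simp only [hFc, this]
  -- divergence theorem
  have hWcC : Continuous fun z => σc.symm (W (σc z)) :=
    σc.symm.continuous.comp (hW.continuous.comp σc.continuous)
  have Hcf : ContinuousOn Fc (Set.Icc a b) := (continuous_fst.comp hWcC).continuousOn
  have Hcg : ContinuousOn Gc (Set.Icc a b) := (continuous_snd.comp hWcC).continuousOn
  have Hi : IntegrableOn (fun z => f' z (1, 0) + g' z (0, 1)) (Set.Icc a b) volume :=
    hDc.continuousOn.integrableOn_compact isCompact_Icc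
  have key := integral_divergence_prod_Icc_of_hasFDerivAt_off_countable_of_le Fc Gc f' g'
    a b hle ∅ Set.countable_empty Hcf Hcg (fun z _ => Hdf z) (fun z _ => Hdg z) Hi
  have e1 : ∫ x in a.1..b.1, Gc (x, b.2) = ∫ x in a.1..b.1, Gc (x, a.2) := by
    apply intervalIntegral.integral_congr; intro x _; exact hGper x
  have e2 : ∫ y in a.2..b.2, Fc (b.1, y) = ∫ y in a.2..b.2, Fc (a.1, y) := by
    apply intervalIntegral.integral_congr; intro y _; exact hFper y
  rw [e1, e2] at key
  have key0 : (∫ z in Set.Icc a b, (f' z (1, 0) + g' z (0, 1))) = 0 := by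
    rw [key]; ring
  -- positivity of the integral
  have hnn' : (0 : ℝ × ℝ → ℝ) ≤ᵐ[volume.restrict (Set.Icc a b)]
      fun z => f' z (1, 0) + g' z (0, 1) := by
    refine Filter.Eventually.of_forall (fun z => ?_)
    show (0:ℝ) ≤ f' z (1, 0) + g' z (0, 1)
    rw [hdiv z]; exact hnn _
  have hsupp : 0 < volume (Function.support (fun z => f' z (1, 0) + g' z (0, 1)) ∩ Set.Icc a b) := by
    set U : Set (ℝ × ℝ) := (fun z => f' z (1, 0) + g' z (0, 1)) ⁻¹' Set.Ioi 0 with hU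
    have hUopen : IsOpen U := hDc.isOpen_preimage _ isOpen_Ioi
    have hz0U : z0 ∈ U := by
      have : divergence W (σc z0) = divergence W p0 := by rw [hz0, σc.apply_symm_apply]
      simp only [hU, Set.mem_preimage, Set.mem_Ioi, hdiv z0, this]
      exact hpos
    set Vs : Set (ℝ × ℝ) := U ∩ (Set.Ioo a.1 b.1 ×ˢ Set.Ioo a.2 b.2) with hVs
    have hVopen : IsOpen Vs := hUopen.inter ((isOpen_Ioo).prod isOpen_Ioo)
    have hz0V : z0 ∈ Vs := by
      refine ⟨hz0U, ?_, ?_⟩ <;> constructor <;> simp only [ha, hb] <;> norm_num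
    have hsub : Vs ⊆ Function.support (fun z => f' z (1, 0) + g' z (0, 1)) ∩ Set.Icc a b := by
      rintro z ⟨hz1, hz2⟩
      constructor
      · exact ne_of_gt hz1
      · rw [Set.Icc_prod_eq]
        exact ⟨Set.Ioo_subset_Icc_self hz2.1, Set.Ioo_subset_Icc_self hz2.2⟩
    calc (0:ENNReal) < volume Vs := hVopen.measure_pos volume ⟨z0, hz0V⟩
      _ ≤ _ := measure_mono hsub
  have hposint : 0 < ∫ z in Set.Icc a b, (f' z (1, 0) + g' z (0, 1)) := by
    rw [setIntegral_pos_iff_support_of_nonneg_ae hnn' Hi]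
    exact hsupp
  rw [key0] at hposint
  exact lt_irrefl 0 hposint

lemma divergence_neg (W : E2 → E2) (p : E2) :
    divergence (fun q => -W q) p = - divergence W p := by
  unfold divergence
  rw [fderiv_fun_neg]
  have : ((-(fderiv ℝ W p)).toLinearMap) = -((fderiv ℝ W p).toLinearMap) := rfl
  rw [this, map_neg]


lemma alg1 (F d S N Hp : ℝ) (hF : F ≠ 0) (hS : S ≠ 0) :
    (-1 : ℝ) * (F * (-Hp - d / (2 * S) * (2 + N / F ^ 2)) + d * ((2 * F * S)⁻¹ * N))
      = F * Hp + F * d / S := by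
  field_simp
  ring

lemma alg2 (F d S N Hp : ℝ) (hF : F ≠ 0) (hS : S ≠ 0) :
    (1 : ℝ) * (F * (-Hp - d / (2 * S) * (2 + N / F ^ 2)) + d * ((2 * F * S)⁻¹ * N))
      = -(F * Hp) - F * d / S := by
  field_simp
  ring

end StmtAux

set_option maxHeartbeats 4000000 in
/-- Corollary 3.6 (uniqueness part) on the flat torus: if `(log f)'' ≤ 0` on
`I` and the smooth doubly periodic `u` with `|Du| < f(u)` satisfies
`H(u)(p)² ≤ f'(u(q))²/f(u(q))²` for all points `p, q`, then `u` is constant. -/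
theorem stmt9 (I : Set ℝ) (hI : IsOpen I) (hIc : I.OrdConnected)
    (f : ℝ → ℝ) (hf : ContDiffOn ℝ (⊤ : ℕ∞) f I) (hfpos : ∀ t ∈ I, 0 < f t)
    (hlog : ∀ t ∈ I, deriv (deriv (fun s => Real.log (f s))) t ≤ 0)
    (u : E2 → ℝ) (hu : ContDiff ℝ (⊤ : ℕ∞) u) (hrange : ∀ p, u p ∈ I)
    (hper : DoublyPeriodic u)
    (hgrad : ∀ p, ‖gradient u p‖ < f (u p))
    (hH : ∀ p q : E2, (Hmean f u p) ^ 2 ≤ (deriv f (u q)) ^ 2 / (f (u q)) ^ 2) :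
    ∃ c : ℝ, ∀ p, u p = c := by
  classical
  have hu2 : ContDiff ℝ ((⊤:ℕ∞)) u := hu.of_le (by simp)
  have hf2 : ContDiffOn ℝ ((⊤:ℕ∞)) f I := hf.of_le (by simp)
  have hud : Differentiable ℝ u := hu2.differentiable (by simp)
  -- extreme values via periodicity
  set e := EuclideanSpace.equiv (Fin 2) ℝ with he
  set K : Set E2 := e.symm '' (Set.Icc (0 : Fin 2 → ℝ) 1) with hK
  have hKcomp : IsCompact K := (isCompact_Icc).image e.symm.continuous
  have hKne : K.Nonempty := ⟨e.symm 0, ⟨0, Set.left_mem_Icc.mpr zero_le_one, rfl⟩⟩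
  have hred : ∀ p : E2, ∃ q ∈ K, u q = u p := by
    intro p
    set k : Fin 2 → ℤ := fun i => ⌊p i⌋ with hk
    set κ : E2 := (WithLp.equiv 2 (Fin 2 → ℝ)).symm (fun i => (k i : ℝ)) with hκ
    refine ⟨p - κ, ?_, ?_⟩
    · refine ⟨fun i => Int.fract (p i), ?_, ?_⟩
      · constructor
        · intro i; exact Int.fract_nonneg _
        · intro i; exact (Int.fract_lt_one _).le
      · ext i
        show Int.fract (p i) = p i - κ i
        rw [Int.fract]
        congr 1
    · have := hper (p - κ) k
      rw [← hκ] at this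
      rw [sub_add_cancel] at this
      exact this.symm
  obtain ⟨pb, hpbK, hpbmax⟩ := hKcomp.exists_isMaxOn hKne hu.continuous.continuousOn
  obtain ⟨pa, hpaK, hpamin⟩ := hKcomp.exists_isMinOn hKne hu.continuous.continuousOn
  set va := u pa with hva
  set vb := u pb with hvb
  have hub : ∀ p, u p ≤ vb := by
    intro p; obtain ⟨q, hqK, hq⟩ := hred p; rw [← hq]; exact hpbmax hqK
  have hlb : ∀ p, va ≤ u p := by
    intro p; obtain ⟨q, hqK, hq⟩ := hred p; rw [← hq]; exact hpamin hqK
  have hab : va ≤ vb := le_trans (hlb pb) (le_refl _)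
  have hmem : ∀ p, u p ∈ Set.Icc va vb := fun p => ⟨hlb p, hub p⟩
  have hIccI : Set.Icc va vb ⊆ I := hIc.out (hrange pa) (hrange pb)
  have hattain : ∀ t ∈ Set.Icc va vb, ∃ q : E2, u q = t := by
    intro t ht
    have := intermediate_value_univ pa pb hu.continuous
    exact this ht
  -- facts about f on I
  have hfdiff : ∀ t ∈ I, DifferentiableAt ℝ f t := by
    intro t ht
    exact (hf2.contDiffAt (hI.mem_nhds ht)).differentiableAt (by simp)
  have hfposI : ∀ t ∈ Set.Icc va vb, 0 < f t := fun t ht => hfpos t (hIccI ht)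
  -- log derivative facts
  set L : ℝ → ℝ := fun s => Real.log (f s) with hL
  have hLd : ∀ t ∈ I, HasDerivAt L (deriv f t / f t) t := by
    intro t ht
    exact HasDerivAt.log ((hfdiff t ht).hasDerivAt) (ne_of_gt (hfpos t ht))
  have hderivL : ∀ t ∈ I, deriv L t = deriv f t / f t := fun t ht => (hLd t ht).deriv
  have hLC : ContDiffOn ℝ ((⊤:ℕ∞)) L I := hf2.log (fun t ht => ne_of_gt (hfpos t ht))
  have hdLC : ContDiffOn ℝ ((⊤:ℕ∞)) (deriv L) I :=
    hLC.deriv_of_isOpen (m := (⊤:ℕ∞)) hI (by exact_mod_cast le_refl _)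
  have hanti : AntitoneOn (deriv L) (Set.Icc va vb) := by
    apply antitoneOn_of_deriv_nonpos (convex_Icc va vb)
    · exact (hdLC.continuousOn).mono hIccI
    · intro t ht
      rw [interior_Icc] at ht
      exact ((hdLC.contDiffAt (hI.mem_nhds (hIccI (Set.Ioo_subset_Icc_self ht)))).differentiableAt
        (by simp)).differentiableWithinAt
    · intro t ht
      rw [interior_Icc] at ht
      exact hlog t (hIccI (Set.Ioo_subset_Icc_self ht))
  have hphi_anti : ∀ s t : ℝ, s ∈ Set.Icc va vb → t ∈ Set.Icc va vb → s ≤ t →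
      deriv f t / f t ≤ deriv f s / f s := by
    intro s t hs ht hst
    have := hanti hs ht hst
    rwa [hderivL s (hIccI hs), hderivL t (hIccI ht)] at this
  have hdfC : ContinuousOn (deriv f) (Set.Icc va vb) :=
    (hf2.deriv_of_isOpen (m := (⊤:ℕ∞)) hI (by exact_mod_cast le_refl _)).continuousOn.mono hIccI
  -- geometric quantities
  set V : E2 → E2 := fun q =>
    (2 * f (u q) * Real.sqrt ((f (u q)) ^ 2 - ‖gradient u q‖ ^ 2))⁻¹ • gradient u q with hVdef
  set s : E2 → ℝ := fun q => Real.sqrt ((f (u q)) ^ 2 - ‖gradient u q‖ ^ 2) with hsdef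
  have hFpos : ∀ p, 0 < f (u p) := fun p => hfpos _ (hrange p)
  have hSpos : ∀ p, 0 < f (u p) ^ 2 - ‖gradient u p‖ ^ 2 := by
    intro p; have h := hgrad p; nlinarith [norm_nonneg (gradient u p)]
  have hspos : ∀ p, 0 < s p := fun p => Real.sqrt_pos.mpr (hSpos p)
  have hssq : ∀ p, s p ^ 2 = f (u p) ^ 2 - ‖gradient u p‖ ^ 2 :=
    fun p => Real.sq_sqrt (hSpos p).le
  have hsle : ∀ p, s p ≤ f (u p) := by
    intro p
    have h1 : Real.sqrt (f (u p) ^ 2 - ‖gradient u p‖ ^ 2) ≤ Real.sqrt (f (u p) ^ 2) :=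
      Real.sqrt_le_sqrt (by nlinarith [norm_nonneg (gradient u p)])
    have h2 : Real.sqrt (f (u p) ^ 2) = f (u p) := Real.sqrt_sq (hFpos p).le
    calc s p ≤ Real.sqrt (f (u p) ^ 2) := h1
    _ = f (u p) := h2
  -- smoothness
  have hgC : ContDiff ℝ ((⊤:ℕ∞)) (fun q : E2 => gradient u q) := contDiff_gradient u hu2
  have hfuC : ContDiff ℝ ((⊤:ℕ∞)) (fun p : E2 => f (u p)) := by
    rw [← contDiffOn_univ]
    exact ContDiffOn.comp hf2 hu2.contDiffOn (fun p _ => hrange p)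
  have hnC : ContDiff ℝ ((⊤:ℕ∞)) (fun p : E2 => ‖gradient u p‖ ^ 2) := by
    have heq : (fun p : E2 => ‖gradient u p‖ ^ 2)
        = fun p : E2 => (inner ℝ (gradient u p) (gradient u p) : ℝ) := by
      funext p; rw [real_inner_self_eq_norm_sq]
    rw [heq]
    exact ContDiff.inner ℝ hgC hgC
  have hSC : ContDiff ℝ ((⊤:ℕ∞)) (fun p : E2 => f (u p) ^ 2 - ‖gradient u p‖ ^ 2) :=
    (hfuC.pow 2).sub hnC
  have hsC : ContDiff ℝ ((⊤:ℕ∞)) s := by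
    rw [contDiff_iff_contDiffAt]
    intro p
    exact (Real.contDiffAt_sqrt (ne_of_gt (hSpos p))).comp p hSC.contDiffAt
  have hVC : ContDiff ℝ ((⊤:ℕ∞)) V := by
    rw [contDiff_iff_contDiffAt]
    intro p
    have hden : ContDiffAt ℝ ((⊤:ℕ∞)) (fun q : E2 => 2 * f (u q) * s q) p :=
      ((contDiff_const.mul hfuC).mul hsC).contDiffAt
    have hne : (2 * f (u p) * s p) ≠ 0 :=
      ne_of_gt (mul_pos (mul_pos two_pos (hFpos p)) (hspos p))
    exact (hden.inv hne).smul hgC.contDiffAt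
  -- periodicity
  have hgper : ∀ (p : E2) (k : Fin 2 → ℤ),
      gradient u (p + (WithLp.equiv 2 (Fin 2 → ℝ)).symm (fun i => (k i : ℝ))) = gradient u p :=
    fun p k => gradient_periodic u hud _ (fun q => hper q k) p
  have hVper : ∀ (p : E2) (k : Fin 2 → ℤ),
      V (p + (WithLp.equiv 2 (Fin 2 → ℝ)).symm (fun i => (k i : ℝ))) = V p := by
    intro p k
    simp only [hVdef]
    rw [hper p k, hgper p k]
  -- inner product identity
  have hinner : ∀ p, fderiv ℝ u p (V p)
      = (2 * f (u p) * s p)⁻¹ * ‖gradient u p‖ ^ 2 := by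
    intro p
    rw [fderiv_eq_inner_gradient]
    show (inner ℝ (gradient u p) ((2 * f (u p) * s p)⁻¹ • gradient u p) : ℝ) = _
    rw [real_inner_smul_right, real_inner_self_eq_norm_sq]
  -- divergence of V and Hmean
  have hdivV : ∀ p, divergence V p = - Hmean f u p
      - deriv f (u p) / (2 * s p) * (2 + ‖gradient u p‖ ^ 2 / f (u p) ^ 2) := by
    intro p
    have h : Hmean f u p = - divergence V p
        - deriv f (u p) / (2 * s p) * (2 + ‖gradient u p‖ ^ 2 / f (u p) ^ 2) := rfl
    linarith [h]
  -- square bound from the curvature hypothesis at q = p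
  have hfHsq : ∀ p, (f (u p) * Hmean f u p) ^ 2 ≤ (deriv f (u p)) ^ 2 := by
    intro p
    have h := hH p p
    have hf2p : (0:ℝ) < f (u p) ^ 2 := pow_pos (hFpos p) 2
    calc (f (u p) * Hmean f u p) ^ 2 = Hmean f u p ^ 2 * f (u p) ^ 2 := by ring
    _ ≤ deriv f (u p) ^ 2 / f (u p) ^ 2 * f (u p) ^ 2 :=
        mul_le_mul_of_nonneg_right h hf2p.le
    _ = deriv f (u p) ^ 2 := by rw [div_mul_cancel₀ _ hf2p.ne']
  -- it suffices to show the gradient vanishes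
  suffices hgz : ∀ p : E2, gradient u p = 0 by
    have hfz : ∀ p, fderiv ℝ u p = 0 := by
      intro p
      have h : fderiv ℝ u p = (InnerProductSpace.toDual ℝ E2) (gradient u p) :=
        ((InnerProductSpace.toDual ℝ E2).apply_symm_apply (fderiv ℝ u p)).symm
      rw [h, hgz p, map_zero]
    exact ⟨u 0, fun p => is_const_of_fderiv_eq_zero hud hfz p 0⟩
  -- the divergence of (c • V), for c = ±(f ∘ u)
  have hdivfV : ∀ (ε : ℝ) (p : E2), divergence (fun q => (ε * f (u q)) • V q) p
      = ε * (f (u p) * divergence V p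
        + deriv f (u p) * ((2 * f (u p) * s p)⁻¹ * ‖gradient u p‖ ^ 2)) := by
    intro ε p
    have hcd : DifferentiableAt ℝ (fun q : E2 => ε * f (u q)) p :=
      ((hfuC.differentiable (by simp)) p).const_mul ε
    have hVd : DifferentiableAt ℝ V p := (hVC.differentiable (by simp)) p
    rw [divergence_smul _ _ p hcd hVd]
    have hfu' : HasFDerivAt (fun q : E2 => f (u q)) ((deriv f (u p)) • fderiv ℝ u p) p :=
      ((hfdiff _ (hrange p)).hasDerivAt).comp_hasFDerivAt p (hud p).hasFDerivAt
    have hc' : HasFDerivAt (fun q : E2 => ε * f (u q)) (ε • ((deriv f (u p)) • fderiv ℝ u p)) p :=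
      hfu'.const_smul ε
    rw [hc'.fderiv]
    simp only [ContinuousLinearMap.smul_apply, smul_eq_mul]
    rw [hinner p]
    ring
  -- Case analysis on the sign of f' on the range of u
  by_cases hc1 : 0 < deriv f vb
  · -- f' > 0 everywhere on the range
    have hdpos : ∀ p, 0 < deriv f (u p) := by
      intro p
      have h1 : deriv f vb / f vb ≤ deriv f (u p) / f (u p) :=
        hphi_anti (u p) vb (hmem p) (Set.right_mem_Icc.mpr hab) (hub p)
      have h2 : 0 < deriv f vb / f vb :=
        div_pos hc1 (hfposI vb (Set.right_mem_Icc.mpr hab))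
      have h3 : 0 < deriv f (u p) / f (u p) := lt_of_lt_of_le h2 h1
      have h4 := mul_pos h3 (hFpos p)
      rwa [div_mul_cancel₀ _ (ne_of_gt (hFpos p))] at h4
    have hWC : ContDiff ℝ ((⊤:ℕ∞)) (fun q : E2 => ((-1 : ℝ) * f (u q)) • V q) :=
      ((contDiff_const.mul hfuC).smul hVC)
    have hWper : ∀ (p : E2) (k : Fin 2 → ℤ),
        (fun q : E2 => ((-1 : ℝ) * f (u q)) • V q)
          (p + (WithLp.equiv 2 (Fin 2 → ℝ)).symm (fun i => (k i : ℝ)))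
        = ((-1 : ℝ) * f (u p)) • V p := by
      intro p k
      simp only
      rw [hper p k, hVper p k]
    have hWnn : ∀ p, 0 ≤ divergence (fun q : E2 => ((-1 : ℝ) * f (u q)) • V q) p := by
      intro p
      rw [hdivfV (-1) p, hdivV p]
      have hs := hspos p
      have hF := hFpos p
      rw [alg1 (f (u p)) (deriv f (u p)) (s p) (‖gradient u p‖ ^ 2) (Hmean f u p)
        (ne_of_gt hF) (ne_of_gt hs)]
      have h1 : - deriv f (u p) ≤ f (u p) * Hmean f u p := by
        nlinarith [hfHsq p, hdpos p]
      have h2' : deriv f (u p) ≤ f (u p) * deriv f (u p) / s p :=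
        (le_div_iff₀ hs).mpr (by nlinarith [hsle p, hdpos p])
      linarith
    have hW0 := periodic_divergence_eq_zero _ hWC hWper hWnn
    intro p
    have h0 := hW0 p
    rw [hdivfV (-1) p, hdivV p] at h0
    have hs := hspos p
    have hF := hFpos p
    rw [alg1 (f (u p)) (deriv f (u p)) (s p) (‖gradient u p‖ ^ 2) (Hmean f u p)
      (ne_of_gt hF) (ne_of_gt hs)] at h0
    -- so f H = - f d / s; combined with -d ≤ f H we get f d / s ≤ d, hence f ≤ s
    have h1 : - deriv f (u p) ≤ f (u p) * Hmean f u p := by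
      nlinarith [hfHsq p, hdpos p]
    have h2 : f (u p) * deriv f (u p) / s p ≤ deriv f (u p) := by linarith
    have h3 : f (u p) * deriv f (u p) ≤ deriv f (u p) * s p := by
      have := (div_le_iff₀ hs).mp h2
      linarith
    have h4 : f (u p) ≤ s p := by nlinarith [hdpos p]
    have h5 : s p = f (u p) := le_antisymm (hsle p) h4
    have h6 : ‖gradient u p‖ ^ 2 = 0 := by nlinarith [hssq p]
    exact norm_eq_zero.mp ((pow_eq_zero_iff two_ne_zero).mp h6)
  · -- f' is not positive at the max value
    push_neg at hc1
    by_cases hc2 : deriv f va < 0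
    · -- f' < 0 everywhere on the range
      have hdneg : ∀ p, deriv f (u p) < 0 := by
        intro p
        have h1 : deriv f (u p) / f (u p) ≤ deriv f va / f va :=
          hphi_anti va (u p) (Set.left_mem_Icc.mpr hab) (hmem p) (hlb p)
        have h2 : deriv f va / f va < 0 :=
          div_neg_of_neg_of_pos hc2 (hfposI va (Set.left_mem_Icc.mpr hab))
        have h3 : deriv f (u p) / f (u p) < 0 := lt_of_le_of_lt h1 h2
        have h4 := mul_neg_of_neg_of_pos h3 (hFpos p)
        rwa [div_mul_cancel₀ _ (ne_of_gt (hFpos p))] at h4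
      have hWC : ContDiff ℝ ((⊤:ℕ∞)) (fun q : E2 => ((1 : ℝ) * f (u q)) • V q) :=
        ((contDiff_const.mul hfuC).smul hVC)
      have hWper : ∀ (p : E2) (k : Fin 2 → ℤ),
          (fun q : E2 => ((1 : ℝ) * f (u q)) • V q)
            (p + (WithLp.equiv 2 (Fin 2 → ℝ)).symm (fun i => (k i : ℝ)))
          = ((1 : ℝ) * f (u p)) • V p := by
        intro p k
        simp only
        rw [hper p k, hVper p k]
      have hWnn : ∀ p, 0 ≤ divergence (fun q : E2 => ((1 : ℝ) * f (u q)) • V q) p := by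
        intro p
        rw [hdivfV 1 p, hdivV p]
        have hs := hspos p
        have hF := hFpos p
        rw [alg2 (f (u p)) (deriv f (u p)) (s p) (‖gradient u p‖ ^ 2) (Hmean f u p)
          (ne_of_gt hF) (ne_of_gt hs)]
        have h1 : f (u p) * Hmean f u p ≤ - deriv f (u p) := by
          nlinarith [hfHsq p, hdneg p]
        have h2 : f (u p) * deriv f (u p) / s p ≤ deriv f (u p) := by
          rw [div_le_iff₀ hs]
          nlinarith [hsle p, hdneg p]
        linarith
      have hW0 := periodic_divergence_eq_zero _ hWC hWper hWnn
      intro p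
      have h0 := hW0 p
      rw [hdivfV 1 p, hdivV p] at h0
      have hs := hspos p
      have hF := hFpos p
      rw [alg2 (f (u p)) (deriv f (u p)) (s p) (‖gradient u p‖ ^ 2) (Hmean f u p)
        (ne_of_gt hF) (ne_of_gt hs)] at h0
      have h1 : f (u p) * Hmean f u p ≤ - deriv f (u p) := by
        nlinarith [hfHsq p, hdneg p]
      have h2 : deriv f (u p) ≤ f (u p) * deriv f (u p) / s p := by linarith
      have h3 : deriv f (u p) * s p ≤ f (u p) * deriv f (u p) :=
        (le_div_iff₀ hs).mp h2
      have h4 : f (u p) ≤ s p := by nlinarith [hdneg p]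
      have h5 : s p = f (u p) := le_antisymm (hsle p) h4
      have h6 : ‖gradient u p‖ ^ 2 = 0 := by nlinarith [hssq p]
      exact norm_eq_zero.mp ((pow_eq_zero_iff two_ne_zero).mp h6)
    · -- f' vanishes at some attained value t0; the graph is maximal
      push_neg at hc2
      obtain ⟨t0, ht0mem, hdt0⟩ :=
        intermediate_value_Icc' hab hdfC ⟨hc1, hc2⟩
      obtain ⟨q0, hq0⟩ := hattain t0 ht0mem
      have hH0 : ∀ p, Hmean f u p = 0 := by
        intro p
        have h := hH p q0
        rw [hq0, hdt0] at h
        simp only [ne_eq, OfNat.ofNat_ne_zero, not_false_eq_true, zero_pow, zero_div] at h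
        exact (pow_eq_zero_iff two_ne_zero).mp (le_antisymm h (sq_nonneg _))
      have hsign : ∀ p, (u p - t0) * deriv f (u p) ≤ 0 := by
        intro p
        rcases le_total (u p) t0 with h | h
        · have h1 : deriv f t0 / f t0 ≤ deriv f (u p) / f (u p) :=
            hphi_anti (u p) t0 (hmem p) ht0mem h
          rw [hdt0, zero_div] at h1
          have h3 := mul_nonneg h1 (hFpos p).le
          rw [div_mul_cancel₀ _ (ne_of_gt (hFpos p))] at h3
          nlinarith
        · have h1 : deriv f (u p) / f (u p) ≤ deriv f t0 / f t0 :=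
            hphi_anti t0 (u p) ht0mem (hmem p) h
          rw [hdt0, zero_div] at h1
          have h3 := mul_nonpos_of_nonpos_of_nonneg h1 (hFpos p).le
          rw [div_mul_cancel₀ _ (ne_of_gt (hFpos p))] at h3
          nlinarith
      have hWC : ContDiff ℝ ((⊤:ℕ∞)) (fun q : E2 => (u q - t0) • V q) :=
        ((hu2.sub contDiff_const).smul hVC)
      have hWper : ∀ (p : E2) (k : Fin 2 → ℤ),
          (fun q : E2 => (u q - t0) • V q)
            (p + (WithLp.equiv 2 (Fin 2 → ℝ)).symm (fun i => (k i : ℝ)))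
          = (u p - t0) • V p := by
        intro p k
        simp only
        rw [hper p k, hVper p k]
      have hdivW : ∀ p, divergence (fun q : E2 => (u q - t0) • V q) p
          = (u p - t0) * divergence V p
            + (2 * f (u p) * s p)⁻¹ * ‖gradient u p‖ ^ 2 := by
        intro p
        have hcd : DifferentiableAt ℝ (fun q : E2 => u q - t0) p := (hud p).sub_const t0
        have hVd : DifferentiableAt ℝ V p := (hVC.differentiable (by simp)) p
        rw [divergence_smul _ _ p hcd hVd]
        rw [fderiv_sub_const, hinner p]
      have hterm : ∀ p, 0 ≤ - ((u p - t0) * deriv f (u p))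
            * ((2 * s p)⁻¹ * (2 + ‖gradient u p‖ ^ 2 / f (u p) ^ 2)) := by
        intro p
        have hfac : 0 ≤ (2 * s p)⁻¹ * (2 + ‖gradient u p‖ ^ 2 / f (u p) ^ 2) := by
          have h1 : 0 ≤ (2 * s p)⁻¹ := inv_nonneg.mpr (by linarith [hspos p])
          have h2 : 0 ≤ ‖gradient u p‖ ^ 2 / f (u p) ^ 2 :=
            div_nonneg (sq_nonneg _) (sq_nonneg _)
          exact mul_nonneg h1 (by linarith)
        exact mul_nonneg (by linarith [hsign p]) hfac
      have hterm2nn : ∀ p, 0 ≤ (2 * f (u p) * s p)⁻¹ * ‖gradient u p‖ ^ 2 := by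
        intro p
        exact mul_nonneg
          (inv_nonneg.mpr (mul_pos (mul_pos two_pos (hFpos p)) (hspos p)).le)
          (sq_nonneg _)
      have hWnn : ∀ p, 0 ≤ divergence (fun q : E2 => (u q - t0) • V q) p := by
        intro p
        rw [hdivW p, hdivV p, hH0 p]
        have hkey : (u p - t0) * (-(0:ℝ) - deriv f (u p) / (2 * s p)
              * (2 + ‖gradient u p‖ ^ 2 / f (u p) ^ 2))
            = - ((u p - t0) * deriv f (u p))
              * ((2 * s p)⁻¹ * (2 + ‖gradient u p‖ ^ 2 / f (u p) ^ 2)) := by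
          rw [div_eq_mul_inv]
          ring
        rw [hkey]
        exact add_nonneg (hterm p) (hterm2nn p)
      have hW0 := periodic_divergence_eq_zero _ hWC hWper hWnn
      intro p
      have h0 := hW0 p
      rw [hdivW p, hdivV p, hH0 p] at h0
      have hkey : (u p - t0) * (-(0:ℝ) - deriv f (u p) / (2 * s p)
            * (2 + ‖gradient u p‖ ^ 2 / f (u p) ^ 2))
          = - ((u p - t0) * deriv f (u p))
            * ((2 * s p)⁻¹ * (2 + ‖gradient u p‖ ^ 2 / f (u p) ^ 2)) := by
        rw [div_eq_mul_inv]
        ring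
      rw [hkey] at h0
      have hz2 : (2 * f (u p) * s p)⁻¹ * ‖gradient u p‖ ^ 2 = 0 :=
        le_antisymm (by linarith [hterm p]) (hterm2nn p)
      have hinvpos : 0 < (2 * f (u p) * s p)⁻¹ :=
        inv_pos.mpr (mul_pos (mul_pos two_pos (hFpos p)) (hspos p))
      have h6 : ‖gradient u p‖ ^ 2 = 0 :=
        (mul_eq_zero.mp hz2).resolve_left (ne_of_gt hinvpos)
      exact norm_eq_zero.mp ((pow_eq_zero_iff two_ne_zero).mp h6)
end
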